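/- Let R be a commutative ring, A a commutative R-algebra, and μ♯ : A → R[t,t⁻¹] ⊗_R A a coaction of the Hopf algebra R[t,t⁻¹] on A. For each n ∈ ℤ set A_n = { a ∈ A : μ♯(a) = tⁿ ⊗ a }. Then each A_n is an R-submodule of A, the family (A_n)_{n∈ℤ} is a ℤ-grading of A: A is the internal direct sum of the A_n, 1 ∈ A_0, and A_n · A_m ⊆ A_{n+m} for all n, m ∈ ℤ. -/

import Mathlib

/-!
Expand `μ a = ∑ₙ Tⁿ ⊗ aₙ`. Comparing coefficients of `Tⁿ` on both sides of the coassociativity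
axiom gives `μ aₙ = Tⁿ ⊗ aₙ`, i.e. `aₙ ∈ Aₙ`, and the counit axiom gives `a = ∑ₙ aₙ`, so the `Aₙ`
span `A`. They are independent because `a ↦ aₙ` is the identity on `Aₙ` and vanishes on `Aₘ` for
`m ≠ n`. Multiplicativity of `μ` together with `Tⁿ Tᵐ = Tⁿ⁺ᵐ` gives the remaining conditions.
-/

open scoped TensorProduct

/-- The counit `ε : R[t,t⁻¹] → R` of the Hopf algebra of Laurent polynomials,
determined by `ε(tⁿ) = 1`. -/
noncomputable def counitT (R : Type*) [CommRing R] : LaurentPolynomial R →ₐ[R] R :=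
  (AddMonoidAlgebra.lift (R := R) (M := ℤ) (A := R)) 1

/-- The comultiplication `Δ : R[t,t⁻¹] → R[t,t⁻¹] ⊗_R R[t,t⁻¹]` of the Hopf algebra of
Laurent polynomials, determined by `Δ(tⁿ) = tⁿ ⊗ tⁿ`. -/
noncomputable def comulT (R : Type*) [CommRing R] :
    LaurentPolynomial R →ₐ[R] LaurentPolynomial R ⊗[R] LaurentPolynomial R :=
  (AddMonoidAlgebra.lift (R := R) (M := ℤ) (A := LaurentPolynomial R ⊗[R] LaurentPolynomial R))
    { toFun := fun n => LaurentPolynomial.T n.toAdd ⊗ₜ[R] LaurentPolynomial.T n.toAdd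
      map_one' := by
        simp only [toAdd_one, LaurentPolynomial.T_zero, Algebra.TensorProduct.one_def]
      map_mul' := fun x y => by
        simp only [toAdd_mul, LaurentPolynomial.T_add, Algebra.TensorProduct.tmul_mul_tmul] }

/-- `μ : A → R[t,t⁻¹] ⊗_R A` is a coaction of the Hopf algebra `R[t,t⁻¹]` on `A`:
it satisfies the counit axiom `(ε ⊗ id_A) ∘ μ = id_A` and the coassociativity axiom
`(Δ ⊗ id_A) ∘ μ = (id ⊗ μ) ∘ μ`. -/
def IsCoaction {R A : Type*} [CommRing R] [CommRing A] [Algebra R A]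
    (μ : A →ₐ[R] LaurentPolynomial R ⊗[R] A) : Prop :=
  ((Algebra.TensorProduct.lid R A).toAlgHom.comp
      ((Algebra.TensorProduct.map (counitT R) (AlgHom.id R A)).comp μ) = AlgHom.id R A) ∧
  ((Algebra.TensorProduct.assoc R R R (LaurentPolynomial R) (LaurentPolynomial R) A).toAlgHom.comp
      ((Algebra.TensorProduct.map (comulT R) (AlgHom.id R A)).comp μ)
    = (Algebra.TensorProduct.map (AlgHom.id R (LaurentPolynomial R)) μ).comp μ)

/-- A ℤ-grading of the commutative `R`-algebra `A`: a family of `R`-submodules whose internal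
direct sum is `A`, with `1 ∈ A₀` and `Aₙ · Aₘ ⊆ A_{n+m}`. -/
def IsGrading {R A : Type*} [CommRing R] [CommRing A] [Algebra R A]
    (𝒜 : ℤ → Submodule R A) : Prop :=
  DirectSum.IsInternal 𝒜 ∧ (1 : A) ∈ 𝒜 0 ∧
    ∀ n m : ℤ, ∀ a ∈ 𝒜 n, ∀ b ∈ 𝒜 m, a * b ∈ 𝒜 (n + m)

open scoped LaurentPolynomial

namespace LaurentPolynomial

variable {R : Type*} [CommRing R]

@[simp]
theorem counitT_T (k : ℤ) : counitT R (T k) = 1 := by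
  rw [T, counitT, AddMonoidAlgebra.lift_single, MonoidHom.one_apply, one_smul]

@[simp]
theorem comulT_T (k : ℤ) : comulT R (T k) = T k ⊗ₜ[R] T k := by
  rw [T, comulT, AddMonoidAlgebra.lift_single, one_smul]
  rfl

variable {N P : Type*} [AddCommGroup N] [Module R N] [AddCommGroup P] [Module R P]

/-- `tensorCoeffs y n` is the coefficient `yₙ` in the unique expansion `y = ∑ₙ Tⁿ ⊗ yₙ`. -/
noncomputable def tensorCoeffs : R[T;T⁻¹] ⊗[R] N ≃ₗ[R] (ℤ →₀ N) :=
  TensorProduct.equivFinsuppOfBasisLeft (AddMonoidAlgebra.basis ℤ R)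

@[simp]
theorem tensorCoeffs_T_tmul (k : ℤ) (x : N) :
    tensorCoeffs (T k ⊗ₜ[R] x) = Finsupp.single k x := by
  rw [tensorCoeffs, TensorProduct.equivFinsuppOfBasisLeft_apply_tmul, T,
    ← AddMonoidAlgebra.basis_apply, Module.Basis.repr_self, Finsupp.mapRange_single, one_smul]

theorem lid_rTensor_counitT (y : R[T;T⁻¹] ⊗[R] N) :
    TensorProduct.lid R N ((counitT R).toLinearMap.rTensor N y)
      = (tensorCoeffs y).sum fun _ x => x := by
  have key : TensorProduct.lid R N ∘ₗ (counitT R).toLinearMap.rTensor N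
      = Finsupp.lsum R (fun _ => LinearMap.id) ∘ₗ tensorCoeffs.toLinearMap := by
    ext k x
    simp
  exact LinearMap.congr_fun key y

theorem tensorCoeffs_assoc_rTensor_comulT (y : R[T;T⁻¹] ⊗[R] N) (n : ℤ) :
    tensorCoeffs (TensorProduct.assoc R _ _ N ((comulT R).toLinearMap.rTensor N y)) n
      = T n ⊗ₜ[R] tensorCoeffs y n := by
  have key : Finsupp.lapply n ∘ₗ tensorCoeffs.toLinearMap ∘ₗ
        (TensorProduct.assoc R _ _ N).toLinearMap ∘ₗ (comulT R).toLinearMap.rTensor N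
      = TensorProduct.mk R _ N (T n) ∘ₗ Finsupp.lapply n ∘ₗ tensorCoeffs.toLinearMap := by
    ext k x
    by_cases h : k = n
    · subst h; simp
    · simp [h]
  exact LinearMap.congr_fun key y

theorem tensorCoeffs_lTensor (g : N →ₗ[R] P) (y : R[T;T⁻¹] ⊗[R] N) (n : ℤ) :
    tensorCoeffs (g.lTensor _ y) n = g (tensorCoeffs y n) := by
  have key : Finsupp.lapply n ∘ₗ tensorCoeffs.toLinearMap ∘ₗ g.lTensor R[T;T⁻¹]
      = g ∘ₗ Finsupp.lapply n ∘ₗ tensorCoeffs.toLinearMap := by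
    ext k x
    simp [Finsupp.single_apply, apply_ite g]
  exact LinearMap.congr_fun key y

end LaurentPolynomial

open LaurentPolynomial

section WeightSpace

variable {R A : Type*} [CommRing R] [CommRing A] [Algebra R A]
  (μ : A →ₐ[R] R[T;T⁻¹] ⊗[R] A)

noncomputable def weightSpace (n : ℤ) : Submodule R A :=
  LinearMap.eqLocus μ.toLinearMap (TensorProduct.mk R R[T;T⁻¹] A (T n))

variable {μ}

theorem mem_weightSpace {n : ℤ} {a : A} : a ∈ weightSpace μ n ↔ μ a = T n ⊗ₜ[R] a :=
  LinearMap.mem_eqLocus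

theorem tensorCoeffs_of_mem_weightSpace {m : ℤ} {a : A} (ha : a ∈ weightSpace μ m) :
    tensorCoeffs (μ a) = Finsupp.single m a := by
  rw [mem_weightSpace.1 ha, tensorCoeffs_T_tmul]

variable (μ) in
theorem iSupIndep_weightSpace : iSupIndep (weightSpace μ) := by
  intro n
  let π : A →ₗ[R] A := Finsupp.lapply n ∘ₗ tensorCoeffs.toLinearMap ∘ₗ μ.toLinearMap
  have π_of_mem {m : ℤ} {a : A} (ha : a ∈ weightSpace μ m) : π a = if m = n then a else 0 := by
    simp [π, tensorCoeffs_of_mem_weightSpace ha, Finsupp.single_apply]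
  have le_ker : (⨆ m, ⨆ _ : m ≠ n, weightSpace μ m) ≤ LinearMap.ker π :=
    iSup₂_le fun m hmn a ha => by rw [LinearMap.mem_ker, π_of_mem ha, if_neg hmn]
  refine Submodule.disjoint_def.2 fun a ha ha' => ?_
  calc a = π a := by rw [π_of_mem ha, if_pos rfl]
    _ = 0 := le_ker ha'

theorem tensorCoeffs_mem_weightSpace (hμ : IsCoaction μ) (a : A) (n : ℤ) :
    tensorCoeffs (μ a) n ∈ weightSpace μ n := by
  rw [mem_weightSpace]
  calc μ (tensorCoeffs (μ a) n)
      = tensorCoeffs (Algebra.TensorProduct.map (AlgHom.id R R[T;T⁻¹]) μ (μ a)) n :=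
        (tensorCoeffs_lTensor μ.toLinearMap (μ a) n).symm
    _ = tensorCoeffs (TensorProduct.assoc R _ _ A ((comulT R).toLinearMap.rTensor A (μ a))) n :=
        congrArg (tensorCoeffs · n) (DFunLike.congr_fun hμ.2 a).symm
    _ = T n ⊗ₜ[R] tensorCoeffs (μ a) n := tensorCoeffs_assoc_rTensor_comulT (μ a) n

theorem iSup_weightSpace_eq_top (hμ : IsCoaction μ) : ⨆ n, weightSpace μ n = ⊤ := by
  refine eq_top_iff.2 fun a _ => ?_
  have decomp : a = (tensorCoeffs (μ a)).sum fun _ x => x := by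
    rw [← lid_rTensor_counitT]
    exact (DFunLike.congr_fun hμ.1 a).symm
  rw [decomp]
  exact Submodule.finsuppSum_mem _ _ _ _ fun n _ =>
    Submodule.mem_iSup_of_mem n (tensorCoeffs_mem_weightSpace hμ a n)

variable (μ) in
theorem one_mem_weightSpace_zero : (1 : A) ∈ weightSpace μ 0 := by
  rw [mem_weightSpace, map_one, T_zero, Algebra.TensorProduct.one_def]

theorem mul_mem_weightSpace {n m : ℤ} {a b : A} (ha : a ∈ weightSpace μ n)
    (hb : b ∈ weightSpace μ m) : a * b ∈ weightSpace μ (n + m) := by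
  rw [mem_weightSpace] at ha hb ⊢
  rw [map_mul, ha, hb, Algebra.TensorProduct.tmul_mul_tmul, T_add]

theorem isInternal_weightSpace (hμ : IsCoaction μ) : DirectSum.IsInternal (weightSpace μ) :=
  (DirectSum.isInternal_submodule_iff_iSupIndep_and_iSup_eq_top _).2
    ⟨iSupIndep_weightSpace μ, iSup_weightSpace_eq_top hμ⟩

end WeightSpace

/-- Given a coaction `μ♯ : A → R[t,t⁻¹] ⊗_R A` of the Hopf algebra
`R[t,t⁻¹]` on the commutative `R`-algebra `A`, the subsets `Aₙ = {a ∈ A : μ♯(a) = tⁿ ⊗ a}`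
are `R`-submodules of `A` and the family `(Aₙ)` is a ℤ-grading of `A`: `A` is the internal
direct sum of the `Aₙ`, `1 ∈ A₀`, and `Aₙ · Aₘ ⊆ A_{n+m}` for all `n, m`. -/
theorem coaction_gives_grading {R A : Type*} [CommRing R] [CommRing A] [Algebra R A]
    (μ : A →ₐ[R] LaurentPolynomial R ⊗[R] A) (hμ : IsCoaction μ) :
    ∃ 𝒜 : ℤ → Submodule R A,
      (∀ (n : ℤ) (a : A), a ∈ 𝒜 n ↔ μ a = LaurentPolynomial.T n ⊗ₜ[R] a) ∧ IsGrading 𝒜 :=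
  ⟨weightSpace μ, fun _ _ => mem_weightSpace, isInternal_weightSpace hμ,
    one_mem_weightSpace_zero μ, fun _ _ _ ha _ hb => mul_mem_weightSpace ha hb⟩
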